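/- arXiv:2109.10180 — 4 statements merged into one kernel-verified Lean document; each statement's English description precedes it below -/
import Mathlib

section
/- Let z₀ ≥ 2 and let z ≥ 1 be real. Then (∏_{p < z₀} p/(p−1)) · G(z; z₀) ≥ G(z), where the product is over primes p < z₀. -/
open Finset

/-- `P(z₀)`: the product of the primes `p < z₀`. -/
noncomputable def Pz (z₀ : ℝ) : ℕ := ∏ p ∈ (range ⌈z₀⌉₊).filter Nat.Prime, p

/-- `G_d(y; z₀) = Σ_{ℓ ≤ y, gcd(ℓ, d·P(z₀)) = 1} μ²(ℓ)/φ(ℓ)`. -/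
noncomputable def Gd (d : ℕ) (y z₀ : ℝ) : ℝ :=
  ∑ ℓ ∈ (Finset.Icc 1 ⌊y⌋₊).filter (fun ℓ => Nat.gcd ℓ (d * Pz z₀) = 1),
    ((ArithmeticFunction.moebius ℓ : ℤ) : ℝ) ^ 2 / (Nat.totient ℓ : ℝ)

/-- `G(y; z₀) = G₁(y; z₀)`. -/
noncomputable def G (y z₀ : ℝ) : ℝ := Gd 1 y z₀

/-- `G(y) = Σ_{ℓ ≤ y} μ²(ℓ)/φ(ℓ)`. -/
noncomputable def G0 (y : ℝ) : ℝ :=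
  ∑ ℓ ∈ Finset.Icc 1 ⌊y⌋₊,
    ((ArithmeticFunction.moebius ℓ : ℤ) : ℝ) ^ 2 / (Nat.totient ℓ : ℝ)

open ArithmeticFunction

private noncomputable def fml (ℓ : ℕ) : ℝ := ((moebius ℓ : ℤ) : ℝ) ^ 2 / (Nat.totient ℓ : ℝ)

private lemma fml_nonneg (ℓ : ℕ) : 0 ≤ fml ℓ :=
  div_nonneg (sq_nonneg _) (Nat.cast_nonneg _)

private lemma fml_sq (ℓ : ℕ) (h : Squarefree ℓ) : ((moebius ℓ : ℤ) : ℝ)^2 = 1 := by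
  rw [ArithmeticFunction.moebius_apply_of_squarefree h]
  push_cast
  rw [← pow_mul, mul_comm, pow_mul]
  simp

private lemma fml_mul (q b : ℕ) (hq : q.Prime) (hc : Nat.Coprime q b) (hb : Squarefree b) :
    fml (q * b) = (1 / ((q : ℝ) - 1)) * fml b := by
  have hqb : Squarefree (q * b) := (Nat.squarefree_mul hc).2 ⟨hq.squarefree, hb⟩
  unfold fml
  rw [fml_sq _ hqb, fml_sq _ hb, Nat.totient_mul hc, Nat.totient_prime hq]
  have h2 : (2:ℕ) ≤ q := hq.two_le
  have hbt : (0:ℝ) < (b.totient : ℝ) := by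
    exact_mod_cast Nat.totient_pos.mpr hb.ne_zero.bot_lt
  have hq1 : (0:ℝ) < (q:ℝ) - 1 := by
    have : (2:ℝ) ≤ (q:ℝ) := by exact_mod_cast h2
    linarith
  have : ((q - 1 : ℕ) : ℝ) = (q:ℝ) - 1 := by
    push_cast [Nat.cast_sub (le_trans one_le_two h2)]; ring
  rw [Nat.cast_mul, this]
  field_simp

private lemma step (n q m : ℕ) (hq : q.Prime) :
    ∑ ℓ ∈ (Finset.Icc 1 n).filter (fun ℓ => Nat.gcd ℓ m = 1), fml ℓ ≤
    ((q : ℝ) / ((q : ℝ) - 1)) *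
      ∑ ℓ ∈ (Finset.Icc 1 n).filter (fun ℓ => Nat.gcd ℓ (q * m) = 1), fml ℓ := by
  set A := (Finset.Icc 1 n).filter (fun ℓ => Nat.gcd ℓ m = 1) with hA
  set T := (Finset.Icc 1 n).filter (fun ℓ => Nat.gcd ℓ (q * m) = 1) with hT
  have hq1 : (0:ℝ) < (q:ℝ) - 1 := by
    have : (2:ℝ) ≤ (q:ℝ) := by exact_mod_cast hq.two_le
    linarith
  have hsplit : ∑ ℓ ∈ A, fml ℓ =
      (∑ ℓ ∈ A.filter (fun ℓ => Nat.gcd ℓ q = 1), fml ℓ) +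
      ∑ ℓ ∈ A.filter (fun ℓ => ¬ Nat.gcd ℓ q = 1), fml ℓ :=
    (Finset.sum_filter_add_sum_filter_not A _ _).symm
  have h1 : A.filter (fun ℓ => Nat.gcd ℓ q = 1) = T := by
    rw [hA, hT, Finset.filter_filter]
    apply Finset.filter_congr
    intro ℓ _
    constructor
    · rintro ⟨h1, h2⟩; exact Nat.Coprime.mul_right h2 h1
    · intro h; exact ⟨(Nat.coprime_mul_iff_right.mp h).2, (Nat.coprime_mul_iff_right.mp h).1⟩
  -- the non-coprime part
  set B := A.filter (fun ℓ => ¬ Nat.gcd ℓ q = 1) with hB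
  have hB2 : ∑ ℓ ∈ B, fml ℓ = ∑ ℓ ∈ B.filter Squarefree, fml ℓ := by
    symm
    apply Finset.sum_filter_of_ne
    intro ℓ _ hne
    by_contra hsf
    apply hne
    unfold fml
    rw [ArithmeticFunction.moebius_eq_zero_of_not_squarefree hsf]
    norm_num
  have key : ∀ ℓ ∈ B.filter Squarefree,
      fml ℓ = (1 / ((q:ℝ) - 1)) * fml (ℓ / q) ∧ ℓ / q ∈ T ∧ q * (ℓ / q) = ℓ := by
    intro ℓ hℓ
    simp only [Finset.mem_filter, hB, hA, Finset.mem_Icc] at hℓ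
    obtain ⟨⟨⟨⟨h1ℓ, hℓn⟩, hm⟩, hnc⟩, hsf⟩ := hℓ
    have hdvd : q ∣ ℓ := by
      by_contra hd
      exact hnc (Nat.Coprime.symm ((hq.coprime_iff_not_dvd).mpr hd))
    have hmul : q * (ℓ / q) = ℓ := Nat.mul_div_cancel' hdvd
    set b := ℓ / q with hb'
    have hsfb : Squarefree b ∧ Nat.Coprime q b := by
      have := hsf
      rw [← hmul] at this
      have h' := (Nat.squarefree_mul_iff).mp this
      exact ⟨h'.2.2, h'.1⟩
    have hbdvd : b ∣ ℓ := ⟨q, by rw [← hmul]; ring⟩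
    refine ⟨?_, ?_, hmul⟩
    · rw [← hmul, fml_mul q b hq hsfb.2 hsfb.1]
    · rw [hT, Finset.mem_filter, Finset.mem_Icc]
      have hb1 : 1 ≤ b := by
        rcases Nat.eq_zero_or_pos b with h0 | h; · rw [h0] at hmul; omega
        exact h
      refine ⟨⟨hb1, le_trans (Nat.div_le_self _ _) hℓn⟩, ?_⟩
      exact Nat.Coprime.mul_right hsfb.2.symm (Nat.Coprime.coprime_dvd_left hbdvd hm)
  have hinj : ∀ x ∈ B.filter Squarefree, ∀ y ∈ B.filter Squarefree, x / q = y / q → x = y := by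
    intro x hx y hy hxy
    have h1 := (key x hx).2.2
    have h2 := (key y hy).2.2
    rw [← h1, ← h2, hxy]
  have hBle : ∑ ℓ ∈ B.filter Squarefree, fml ℓ ≤ (1 / ((q:ℝ) - 1)) * ∑ ℓ ∈ T, fml ℓ := by
    calc ∑ ℓ ∈ B.filter Squarefree, fml ℓ
        = ∑ ℓ ∈ B.filter Squarefree, (1 / ((q:ℝ) - 1)) * fml (ℓ / q) :=
          Finset.sum_congr rfl (fun ℓ hℓ => (key ℓ hℓ).1)
      _ = (1 / ((q:ℝ) - 1)) * ∑ ℓ ∈ B.filter Squarefree, fml (ℓ / q) := by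
          rw [Finset.mul_sum]
      _ = (1 / ((q:ℝ) - 1)) * ∑ b ∈ (B.filter Squarefree).image (· / q), fml b := by
          rw [Finset.sum_image hinj]
      _ ≤ (1 / ((q:ℝ) - 1)) * ∑ ℓ ∈ T, fml ℓ := by
          apply mul_le_mul_of_nonneg_left _ (by positivity)
          apply Finset.sum_le_sum_of_subset_of_nonneg
          · intro b hb
            rw [Finset.mem_image] at hb
            obtain ⟨ℓ, hℓ, rfl⟩ := hb
            exact (key ℓ hℓ).2.1
          · intro i _ _; exact fml_nonneg i
  have hTnn : 0 ≤ ∑ ℓ ∈ T, fml ℓ := Finset.sum_nonneg (fun i _ => fml_nonneg i)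
  rw [hsplit, h1, hB2]
  have : (q:ℝ) / ((q:ℝ) - 1) = 1 + 1 / ((q:ℝ) - 1) := by field_simp; ring
  rw [this, add_mul, one_mul]
  exact add_le_add le_rfl hBle

private lemma keyind (n : ℕ) (s : Finset ℕ) (hs : ∀ p ∈ s, p.Prime) :
    (∑ ℓ ∈ Finset.Icc 1 n, fml ℓ) ≤
    (∏ p ∈ s, (p : ℝ) / ((p : ℝ) - 1)) *
      ∑ ℓ ∈ (Finset.Icc 1 n).filter (fun ℓ => Nat.gcd ℓ (∏ p ∈ s, p) = 1), fml ℓ := by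
  induction s using Finset.induction_on with
  | empty =>
    simp [Nat.gcd_one_right]
  | @insert q t hq ih =>
    have hqp : q.Prime := hs q (Finset.mem_insert_self q t)
    have ht : ∀ p ∈ t, p.Prime := fun p hp => hs p (Finset.mem_insert_of_mem hp)
    have hprodnn : 0 ≤ ∏ p ∈ t, (p : ℝ) / ((p : ℝ) - 1) := by
      apply Finset.prod_nonneg
      intro p hp
      have : (2:ℝ) ≤ (p:ℝ) := by exact_mod_cast (ht p hp).two_le
      apply div_nonneg <;> linarith
    calc (∑ ℓ ∈ Finset.Icc 1 n, fml ℓ)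
        ≤ (∏ p ∈ t, (p : ℝ) / ((p : ℝ) - 1)) *
          ∑ ℓ ∈ (Finset.Icc 1 n).filter (fun ℓ => Nat.gcd ℓ (∏ p ∈ t, p) = 1), fml ℓ := ih ht
      _ ≤ (∏ p ∈ t, (p : ℝ) / ((p : ℝ) - 1)) * (((q : ℝ) / ((q : ℝ) - 1)) *
          ∑ ℓ ∈ (Finset.Icc 1 n).filter
            (fun ℓ => Nat.gcd ℓ (q * ∏ p ∈ t, p) = 1), fml ℓ) :=
          mul_le_mul_of_nonneg_left (step n q _ hqp) hprodnn
      _ = _ := by rw [Finset.prod_insert hq, Finset.prod_insert hq]; ring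


/-- Lemma (evalG2): `(∏_{p < z₀} p/(p−1)) · G(z; z₀) ≥ G(z)`. -/
theorem stmt_7 (z₀ : ℝ) (hz₀ : 2 ≤ z₀) (z : ℝ) (hz : 1 ≤ z) :
    (∏ p ∈ (range ⌈z₀⌉₊).filter Nat.Prime, (p : ℝ) / ((p : ℝ) - 1)) * G z z₀ ≥ G0 z := by
  have := keyind ⌊z⌋₊ ((range ⌈z₀⌉₊).filter Nat.Prime)
    (fun p hp => (Finset.mem_filter.mp hp).2)
  rw [ge_iff_le]
  unfold G Gd G0 Pz
  rw [one_mul]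
  exact this
end

section
/- Let h ≥ 0 and let y ≥ 1 be real. Then Σ_{ℓ ≤ y} μ²(ℓ)/φ(ℓ)^{1+h} ≥ Σ_{q ≤ y} 1/q^{1+h}, where both sums are over positive integers up to y. -/
open Finset

/-!
Group the `q ≤ N` by their radical `ℓ`, which is squarefree. Each `q ≤ N` with radical `ℓ` has
the form `ℓ m` with `m ∣ ℓ ^ (N + 1)`, so by multiplicativity and the geometric series
`∑_{rad q = ℓ} q^{-s} ≤ ∏_{p ∣ ℓ} p^{-s} / (1 - p^{-s}) = ∏_{p ∣ ℓ} 1 / (p^s - 1)`.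
For `s = 1 + h ≥ 1`, superadditivity of `t ↦ t^s` gives `(p - 1)^s + 1 ≤ p^s`, so each factor is at
most `(p - 1)^{-s}`, and the product is `φ(ℓ)^{-s} = μ²(ℓ) / φ(ℓ)^s`.
-/

open ArithmeticFunction UniqueFactorizationMonoid

namespace ArithmeticFunction

theorem IsMultiplicative.sum_divisors_eq_prod {R : Type*} [CommSemiring R]
    {f : ArithmeticFunction R} (hf : f.IsMultiplicative) {n : ℕ} (hn : n ≠ 0) :
    ∑ d ∈ n.divisors, f d =
      ∏ p ∈ n.primeFactors, ∑ k ∈ range (n.factorization p + 1), f (p ^ k) := by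
  rw [← coe_mul_zeta_apply,
    (hf.mul isMultiplicative_zeta.natCast).multiplicative_factorization _ hn]
  exact prod_congr n.support_factorization fun p hp =>
    coe_mul_zeta_apply.trans (Nat.sum_divisors_prime_pow (Nat.prime_of_mem_primeFactors hp))

noncomputable def rpow (s : ℝ) : ArithmeticFunction ℝ :=
  ⟨fun n => if n = 0 then 0 else (n : ℝ) ^ s, if_pos rfl⟩

theorem rpow_apply (s : ℝ) {n : ℕ} (hn : n ≠ 0) : rpow s n = (n : ℝ) ^ s := if_neg hn

theorem isMultiplicative_rpow (s : ℝ) : (rpow s).IsMultiplicative := by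
  refine IsMultiplicative.iff_ne_zero.mpr ⟨by simp [rpow], fun {m n} hm hn _ => ?_⟩
  rw [rpow_apply s (mul_ne_zero hm hn), rpow_apply s hm, rpow_apply s hn, Nat.cast_mul,
    Real.mul_rpow m.cast_nonneg n.cast_nonneg]

end ArithmeticFunction

theorem sum_geometric_le_of_lt_one {r : ℝ} (h₀ : 0 ≤ r) (h₁ : r < 1) (s : Finset ℕ) :
    ∑ k ∈ s, r ^ k ≤ (1 - r)⁻¹ :=
  tsum_geometric_of_lt_one h₀ h₁ ▸
    (summable_geometric_of_lt_one h₀ h₁).sum_le_tsum s fun k _ => pow_nonneg h₀ k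

theorem Nat.sum_divisors_rpow_neg_le_prod {s : ℝ} (hs : 0 < s) {n : ℕ} (hn : n ≠ 0) :
    ∑ d ∈ n.divisors, (d : ℝ) ^ (-s) ≤ ∏ p ∈ n.primeFactors, (1 - (p : ℝ) ^ (-s))⁻¹ := by
  have hterm : ∀ d ∈ n.divisors, (d : ℝ) ^ (-s) = rpow (-s) d := fun d hd =>
    (rpow_apply _ (Nat.ne_of_gt (Nat.pos_of_mem_divisors hd))).symm
  rw [sum_congr rfl hterm, (isMultiplicative_rpow _).sum_divisors_eq_prod hn]
  refine prod_le_prod (fun p hp => sum_nonneg fun k _ => ?_) fun p hp => ?_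
  · rw [rpow_apply _ (pow_ne_zero k (Nat.pos_of_mem_primeFactors hp).ne')]
    positivity
  · have hp := Nat.prime_of_mem_primeFactors hp
    have hpow : ∀ k ∈ range (n.factorization p + 1), rpow (-s) (p ^ k) = ((p : ℝ) ^ (-s)) ^ k :=
      fun k _ => by
        rw [rpow_apply _ (pow_ne_zero k hp.ne_zero), Nat.cast_pow,
          Real.rpow_pow_comm p.cast_nonneg]
    rw [sum_congr rfl hpow]
    exact sum_geometric_le_of_lt_one (by positivity)
      (Real.rpow_lt_one_of_one_lt_of_neg (by exact_mod_cast hp.one_lt) (neg_lt_zero.mpr hs)) _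

theorem Real.rpow_neg_mul_inv_one_sub_rpow_neg_le {x s : ℝ} (hx : 1 < x) (hs : 1 ≤ s) :
    x ^ (-s) * (1 - x ^ (-s))⁻¹ ≤ (x - 1) ^ (-s) := by
  have hsuper : (x - 1) ^ s + 1 ≤ x ^ s := by
    simpa using Real.add_rpow_le_rpow_add (sub_nonneg.mpr hx.le) zero_le_one hs
  have hpos : 0 < (x - 1) ^ s := Real.rpow_pos_of_pos (sub_pos.mpr hx) s
  have hlhs : x ^ (-s) * (1 - x ^ (-s))⁻¹ = (x ^ s - 1)⁻¹ := by
    rw [Real.rpow_neg (by linarith)]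
    field_simp
  rw [hlhs, Real.rpow_neg (sub_nonneg.mpr hx.le)]
  exact inv_anti₀ hpos (by linarith)

theorem Nat.totient_eq_prod_sub_one_of_squarefree {n : ℕ} (hn : Squarefree n) :
    Nat.totient n = ∏ p ∈ n.primeFactors, (p - 1) := by
  have h := totient_mul_prod_primeFactors n
  rw [prod_primeFactors_of_squarefree hn, mul_comm n] at h
  exact Nat.eq_of_mul_eq_mul_right (Nat.pos_of_ne_zero hn.ne_zero) h

theorem Nat.filter_radical_eq_subset_image_mul_divisors (ℓ N : ℕ) :
    (Icc 1 N).filter (fun q => radical q = ℓ) ⊆ (ℓ ^ (N + 1)).divisors.image (ℓ * ·) := by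
  intro q hq
  obtain ⟨hqIcc, rfl⟩ := mem_filter.mp hq
  obtain ⟨hq1, hqN⟩ := mem_Icc.mp hqIcc
  refine mem_image.mpr ⟨q / radical q, Nat.mem_divisors.mpr ⟨?_, pow_ne_zero _ radical_ne_zero⟩,
    Nat.mul_div_cancel' radical_dvd_self⟩
  calc q / radical q ∣ q := Nat.div_dvd_of_dvd radical_dvd_self
    _ ∣ radical q ^ q := dvd_radical_pow_self (by omega)
    _ ∣ radical q ^ (N + 1) := pow_dvd_pow _ (by omega)

theorem sum_rpow_neg_filter_radical_eq_le_totient_rpow_neg {s : ℝ} (hs : 1 ≤ s) {ℓ : ℕ}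
    (hℓ : Squarefree ℓ) (N : ℕ) :
    ∑ q ∈ (Icc 1 N).filter (fun q => radical q = ℓ), (q : ℝ) ^ (-s) ≤
      (Nat.totient ℓ : ℝ) ^ (-s) := by
  have hℓ0 := hℓ.ne_zero
  have hprimes : ∀ p ∈ ℓ.primeFactors, (1 : ℝ) < p := fun p hp => by
    exact_mod_cast (Nat.prime_of_mem_primeFactors hp).one_lt
  calc ∑ q ∈ (Icc 1 N).filter (fun q => radical q = ℓ), (q : ℝ) ^ (-s)
      ≤ ∑ q ∈ (ℓ ^ (N + 1)).divisors.image (ℓ * ·), (q : ℝ) ^ (-s) :=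
        sum_le_sum_of_subset_of_nonneg (Nat.filter_radical_eq_subset_image_mul_divisors ℓ N)
          fun _ _ _ => by positivity
    _ = (ℓ : ℝ) ^ (-s) * ∑ m ∈ (ℓ ^ (N + 1)).divisors, (m : ℝ) ^ (-s) := by
        rw [sum_image fun _ _ _ _ h => Nat.eq_of_mul_eq_mul_left (Nat.pos_of_ne_zero hℓ0) h,
          mul_sum]
        simp only [Nat.cast_mul, Real.mul_rpow (Nat.cast_nonneg _) (Nat.cast_nonneg _)]
    _ ≤ (ℓ : ℝ) ^ (-s) * ∏ p ∈ ℓ.primeFactors, (1 - (p : ℝ) ^ (-s))⁻¹ := by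
        rw [← Nat.primeFactors_pow ℓ N.succ_ne_zero]
        exact mul_le_mul_of_nonneg_left
          (Nat.sum_divisors_rpow_neg_le_prod (by linarith) (pow_ne_zero _ hℓ0)) (by positivity)
    _ = ∏ p ∈ ℓ.primeFactors, (p : ℝ) ^ (-s) * (1 - (p : ℝ) ^ (-s))⁻¹ := by
        rw [prod_mul_distrib, Real.finsetProd_rpow _ _ (fun _ _ => Nat.cast_nonneg _),
          ← Nat.cast_prod, Nat.prod_primeFactors_of_squarefree hℓ]
    _ ≤ ∏ p ∈ ℓ.primeFactors, ((p : ℝ) - 1) ^ (-s) := by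
        refine prod_le_prod (fun p hp => ?_) fun p hp =>
          Real.rpow_neg_mul_inv_one_sub_rpow_neg_le (hprimes p hp) hs
        have : (p : ℝ) ^ (-s) < 1 :=
          Real.rpow_lt_one_of_one_lt_of_neg (hprimes p hp) (by linarith)
        have : 0 < 1 - (p : ℝ) ^ (-s) := by linarith
        positivity
    _ = (Nat.totient ℓ : ℝ) ^ (-s) := by
        rw [Real.finsetProd_rpow _ _ (fun p hp => by linarith [hprimes p hp]),
          Nat.totient_eq_prod_sub_one_of_squarefree hℓ, Nat.cast_prod]
        refine congrArg (· ^ (-s)) (prod_congr rfl fun p hp => ?_)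
        rw [Nat.cast_sub (Nat.pos_of_mem_primeFactors hp), Nat.cast_one]

theorem stmt_8_general (h : ℝ) (hh : 0 ≤ h) (y : ℝ) :
    ∑ ℓ ∈ Finset.Icc 1 ⌊y⌋₊,
        ((ArithmeticFunction.moebius ℓ : ℤ) : ℝ) ^ 2 / (Nat.totient ℓ : ℝ) ^ ((1 : ℝ) + h)
      ≥ ∑ q ∈ Finset.Icc 1 ⌊y⌋₊, 1 / (q : ℝ) ^ ((1 : ℝ) + h) := by
  set N := ⌊y⌋₊
  have hradical : ∀ q ∈ Icc 1 N, radical q ∈ Icc 1 N := fun q hq => by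
    obtain ⟨hq1, hqN⟩ := mem_Icc.mp hq
    exact mem_Icc.mpr ⟨Nat.radical_pos q, (Nat.radical_le_self_iff.mpr (by omega)).trans hqN⟩
  simp only [ge_iff_le, one_div, ← Real.rpow_neg (Nat.cast_nonneg _)]
  rw [← sum_fiberwise_of_maps_to hradical]
  refine sum_le_sum fun ℓ _ => ?_
  by_cases hℓ : Squarefree ℓ
  · rw [← Int.cast_pow, moebius_sq_eq_one_of_squarefree hℓ, Int.cast_one, one_div,
      ← Real.rpow_neg (Nat.cast_nonneg _)]
    exact sum_rpow_neg_filter_radical_eq_le_totient_rpow_neg (by linarith) hℓ N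
  · have hfiber : (Icc 1 N).filter (fun q => radical q = ℓ) = ∅ :=
      filter_false_of_mem fun q _ hq => hℓ (hq ▸ squarefree_radical)
    rw [hfiber, sum_empty]
    positivity

/-- Lemma (auxvarphi): `Σ_{ℓ ≤ y} μ²(ℓ)/φ(ℓ)^{1+h} ≥ Σ_{q ≤ y} 1/q^{1+h}`. -/
theorem stmt_8 (h : ℝ) (hh : 0 ≤ h) (y : ℝ) (hy : 1 ≤ y) :
    ∑ ℓ ∈ Finset.Icc 1 ⌊y⌋₊,
        ((ArithmeticFunction.moebius ℓ : ℤ) : ℝ) ^ 2 / (Nat.totient ℓ : ℝ) ^ ((1 : ℝ) + h)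
      ≥ ∑ q ∈ Finset.Icc 1 ⌊y⌋₊, 1 / (q : ℝ) ^ ((1 : ℝ) + h) :=
  stmt_8_general h hh y
end

section
/- For every real z ≥ 1 one has G(z) = Σ_{ℓ ≤ z} μ²(ℓ)/φ(ℓ) ≥ log z, the sum being over positive integers ℓ ≤ z. -/
open Finset

/-- inverse as a monoid hom ℕ →* ℝ -/
noncomputable def finv : ℕ →* ℝ := (invMonoidHom).comp (Nat.castRingHom ℝ).toMonoidHom

lemma finv_apply (n : ℕ) : finv n = ((n : ℝ))⁻¹ := rfl

lemma sq_prod_primes {s : Finset ℕ} (hs : ∀ p ∈ s, p.Prime) :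
    Squarefree (∏ p ∈ s, p) := by
  classical
  induction s using Finset.induction with
  | empty => simp only [Finset.prod_empty]; exact squarefree_one
  | @insert a s' hps ih =>
    rw [Finset.prod_insert hps]
    have ha : a.Prime := hs a (mem_insert_self a s')
    have hcop : Nat.Coprime a (∏ p ∈ s', p) := by
      refine Nat.Coprime.prod_right fun p hp => ?_
      exact (Nat.coprime_primes ha (hs p (Finset.mem_insert_of_mem hp))).mpr
        (by rintro rfl; exact hps hp)
    exact (Nat.squarefree_mul hcop).mpr
      ⟨ha.squarefree, ih fun p hp => hs p (mem_insert_of_mem hp)⟩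

lemma key_fiber (N ℓ : ℕ) (hℓ : Squarefree ℓ) :
    ∑ n ∈ (Finset.Icc 1 N).filter (fun n => ∏ p ∈ n.primeFactors, p = ℓ), (1:ℝ)/n
      ≤ 1 / (Nat.totient ℓ : ℝ) := by
  classical
  have hℓ0 : ℓ ≠ 0 := hℓ.ne_zero
  set s : Finset ℕ := ℓ.primeFactors with hs
  have hsp : ∀ p ∈ s, p.Prime := fun p hp => Nat.prime_of_mem_primeFactors hp
  have hnorm : ∀ {p : ℕ}, p.Prime → ‖finv p‖ < 1 := by
    intro p hp
    have h1 : (1:ℝ) < p := by exact_mod_cast hp.one_lt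
    rw [finv_apply, norm_inv, Real.norm_natCast]
    rw [inv_lt_one_iff₀]
    right; exact h1
  obtain ⟨hsum, hhs⟩ :=
    EulerProduct.summable_and_hasSum_factoredNumbers_prod_filter_prime_geometric
      (f := finv) hnorm s
  have hfilter : s.filter Nat.Prime = s := Finset.filter_true_of_mem hsp
  have hone_sub_pos : ∀ p ∈ s, (0:ℝ) < 1 - (p:ℝ)⁻¹ := by
    intro p hp
    have h1 : (1:ℝ) < p := by exact_mod_cast (hsp p hp).one_lt
    have : (p:ℝ)⁻¹ < 1 := by rw [inv_lt_one_iff₀]; right; exact h1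
    linarith
  have htsum : ∑' m : (Nat.factoredNumbers s), ((m : ℕ) : ℝ)⁻¹
      = ∏ p ∈ s, (1 - (p:ℝ)⁻¹)⁻¹ := by
    have := hhs.tsum_eq
    rw [hfilter] at this
    simpa [finv_apply] using this
  have hsummable : Summable ((Nat.factoredNumbers s).indicator (fun m => ((m:ℝ))⁻¹)) := by
    rw [← summable_subtype_iff_indicator]
    exact hhs.summable
  -- totient formula
  have hφ : (Nat.totient ℓ : ℝ) = (ℓ:ℝ) * ∏ p ∈ s, (1 - (p:ℝ)⁻¹) := by
    have h1 := Nat.totient_eq_mul_prod_factors ℓ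
    have h2 : ((Nat.totient ℓ : ℚ) : ℝ) = ((ℓ : ℚ) : ℝ) * ((∏ p ∈ s, (1 - (p:ℚ)⁻¹) : ℚ) : ℝ) := by
      rw [h1]; push_cast; ring
    rw [Rat.cast_natCast, Rat.cast_natCast] at h2
    rw [h2]
    congr 1
    push_cast
    rfl
  set T := (Finset.Icc 1 N).filter (fun n => ∏ p ∈ n.primeFactors, p = ℓ) with hT
  have hmem : ∀ n ∈ T, ℓ ∣ n ∧ n ≠ 0 := by
    intro n hn
    obtain ⟨hn1, hrad⟩ := Finset.mem_filter.mp hn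
    have hn0 : n ≠ 0 := by
      have := (Finset.mem_Icc.mp hn1).1; omega
    exact ⟨hrad ▸ Nat.prod_primeFactors_dvd n, hn0⟩
  have hstep1 : ∑ n ∈ T, (1:ℝ)/n = (1/(ℓ:ℝ)) * ∑ n ∈ T, (1:ℝ)/((n / ℓ : ℕ) : ℝ) := by
    rw [Finset.mul_sum]
    refine Finset.sum_congr rfl fun n hn => ?_
    obtain ⟨hdvd, hn0⟩ := hmem n hn
    have hm0 : n / ℓ ≠ 0 := by
      intro h
      have := Nat.div_mul_cancel hdvd
      rw [h, zero_mul] at this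
      exact hn0 this.symm
    have hcast : (n:ℝ) = (ℓ:ℝ) * ((n/ℓ : ℕ) : ℝ) := by
      rw [← Nat.cast_mul, Nat.mul_div_cancel' hdvd]
    rw [hcast]
    rw [one_div, one_div, one_div, mul_inv]
  have hinj : ∀ x ∈ T, ∀ y ∈ T, x / ℓ = y / ℓ → x = y := by
    intro x hx y hy h
    obtain ⟨hdx, _⟩ := hmem x hx
    obtain ⟨hdy, _⟩ := hmem y hy
    rw [← Nat.div_mul_cancel hdx, ← Nat.div_mul_cancel hdy, h]
  have hstep2 : ∑ n ∈ T, (1:ℝ)/((n / ℓ : ℕ) : ℝ) = ∑ m ∈ T.image (· / ℓ), (1:ℝ)/(m:ℝ) :=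
    (Finset.sum_image (f := fun m : ℕ => (1:ℝ)/(m:ℝ)) (g := (· / ℓ)) hinj).symm
  have himg : ∀ m ∈ T.image (· / ℓ), m ∈ Nat.factoredNumbers s := by
    intro m hm
    obtain ⟨n, hn, rfl⟩ := Finset.mem_image.mp hm
    obtain ⟨hdvd, hn0⟩ := hmem n hn
    rw [Nat.mem_factoredNumbers']
    intro p hp hpd
    have hpn : p ∣ n := hpd.trans (Nat.div_dvd_of_dvd hdvd)
    have hpmem : p ∈ n.primeFactors := Nat.mem_primeFactors.mpr ⟨hp, hpn, hn0⟩
    have hfac : ℓ.primeFactors = n.primeFactors := by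
      conv_lhs => rw [← (Finset.mem_filter.mp hn).2]
      exact Nat.primeFactors_prod (fun q hq => Nat.prime_of_mem_primeFactors hq)
    rw [hs, hfac]
    exact hpmem
  have hstep3 : ∑ m ∈ T.image (· / ℓ), (1:ℝ)/(m:ℝ) ≤ ∏ p ∈ s, (1 - (p:ℝ)⁻¹)⁻¹ := by
    have heq : ∑' m : ↥(Nat.factoredNumbers s), ((m : ℕ) : ℝ)⁻¹
        = ∑' k : ℕ, (Nat.factoredNumbers s).indicator (fun k : ℕ => ((k:ℝ))⁻¹) k :=
      _root_.tsum_subtype (Nat.factoredNumbers s) (fun k : ℕ => ((k:ℝ))⁻¹)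
    rw [← htsum, heq]
    have hle := Summable.sum_le_tsum (T.image (· / ℓ))
      (fun m _ => Set.indicator_nonneg (fun k _ => by positivity) m) hsummable
    refine le_trans (le_of_eq ?_) hle
    refine Finset.sum_congr rfl fun m hm => ?_
    rw [Set.indicator_of_mem (himg m hm), one_div]
  have hℓpos : (0:ℝ) < ℓ := by exact_mod_cast Nat.pos_of_ne_zero hℓ0
  have hfinal : (1/(ℓ:ℝ)) * ∏ p ∈ s, (1 - (p:ℝ)⁻¹)⁻¹ = 1 / (Nat.totient ℓ : ℝ) := by
    rw [hφ, Finset.prod_inv_distrib, one_div, one_div, mul_inv]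
  calc ∑ n ∈ T, (1:ℝ)/n
      = (1/(ℓ:ℝ)) * ∑ m ∈ T.image (· / ℓ), (1:ℝ)/(m:ℝ) := by rw [hstep1, hstep2]
    _ ≤ (1/(ℓ:ℝ)) * ∏ p ∈ s, (1 - (p:ℝ)⁻¹)⁻¹ := by
        apply mul_le_mul_of_nonneg_left hstep3 (by positivity)
    _ = 1 / (Nat.totient ℓ : ℝ) := hfinal

/-- Lemma (evalG3): `G(z) ≥ log z` for `z ≥ 1`. -/
theorem stmt_9 (z : ℝ) (hz : 1 ≤ z) : G0 z ≥ Real.log z := by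
  classical
  have h0 : (0:ℝ) ≤ z := by linarith
  have hlog : Real.log z ≤ (harmonic ⌊z⌋₊ : ℝ) := log_le_harmonic_floor z h0
  set N := ⌊z⌋₊ with hN
  have hharm : ((harmonic N : ℚ) : ℝ) = ∑ n ∈ Finset.Icc 1 N, (1:ℝ)/n := by
    rw [harmonic_eq_sum_Icc]
    push_cast
    simp [one_div]
  have hmaps : ∀ n ∈ Finset.Icc 1 N, (∏ p ∈ n.primeFactors, p) ∈ Finset.Icc 1 N := by
    intro n hn
    obtain ⟨h1, h2⟩ := Finset.mem_Icc.mp hn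
    have hd : (∏ p ∈ n.primeFactors, p) ∣ n := Nat.prod_primeFactors_dvd n
    have hpos : 0 < ∏ p ∈ n.primeFactors, p :=
      Nat.pos_of_ne_zero (fun h => by simp [h] at hd; omega)
    exact Finset.mem_Icc.mpr ⟨hpos, le_trans (Nat.le_of_dvd (by omega) hd) h2⟩
  have hfib : ∑ n ∈ Finset.Icc 1 N, (1:ℝ)/n
      = ∑ ℓ ∈ Finset.Icc 1 N, ∑ n ∈ (Finset.Icc 1 N).filter
          (fun n => ∏ p ∈ n.primeFactors, p = ℓ), (1:ℝ)/n :=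
    (Finset.sum_fiberwise_of_maps_to hmaps _).symm
  have hterm : ∀ ℓ ∈ Finset.Icc 1 N,
      ∑ n ∈ (Finset.Icc 1 N).filter (fun n => ∏ p ∈ n.primeFactors, p = ℓ), (1:ℝ)/n
        ≤ ((ArithmeticFunction.moebius ℓ : ℤ) : ℝ) ^ 2 / (Nat.totient ℓ : ℝ) := by
    intro ℓ hℓmem
    by_cases hsq : Squarefree ℓ
    · have hmu : ((ArithmeticFunction.moebius ℓ : ℤ) : ℝ) ^ 2 = 1 := by
        have := ArithmeticFunction.moebius_sq_eq_one_of_squarefree hsq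
        exact_mod_cast this
      rw [hmu]
      exact key_fiber N ℓ hsq
    · have hempty : (Finset.Icc 1 N).filter (fun n => ∏ p ∈ n.primeFactors, p = ℓ) = ∅ := by
        refine Finset.filter_eq_empty_iff.mpr fun n hn h => ?_
        exact hsq (h ▸ sq_prod_primes (fun p hp => Nat.prime_of_mem_primeFactors hp))
      rw [hempty, ArithmeticFunction.moebius_eq_zero_of_not_squarefree hsq]
      simp
  calc Real.log z ≤ ((harmonic N : ℚ) : ℝ) := hlog
    _ = ∑ n ∈ Finset.Icc 1 N, (1:ℝ)/n := hharm
    _ = ∑ ℓ ∈ Finset.Icc 1 N, ∑ n ∈ (Finset.Icc 1 N).filter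
          (fun n => ∏ p ∈ n.primeFactors, p = ℓ), (1:ℝ)/n := hfib
    _ ≤ G0 z := Finset.sum_le_sum hterm
end

section
/- Let h > 0 and let D ≥ 1 be real. Then Σ_{d ≤ D} μ²(d)/φ(d)^{1+h} ≥ (1 − D^{−h})/h, the sum being over positive integers d ≤ D. -/
open Finset

private lemma geom_bound' (p : ℕ) (hp : 2 ≤ p) (s : ℝ) (hs : 1 ≤ s) (N : ℕ) :
    ∑ a ∈ Finset.Icc 1 N, ((p : ℝ) ^ (-s)) ^ a ≤ ((p : ℝ) - 1) ^ (-s) := by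
  have hp1 : (1 : ℝ) < (p : ℝ) := by exact_mod_cast hp.trans_lt' one_lt_two
  have hs0 : 0 < s := lt_of_lt_of_le one_pos hs
  set x : ℝ := (p : ℝ) ^ (-s) with hxdef
  have hx0 : 0 ≤ x := Real.rpow_nonneg (by positivity) _
  have hx1 : x < 1 := by
    rw [hxdef]
    exact Real.rpow_lt_one_of_one_lt_of_neg hp1 (by linarith)
  -- sum over Icc 1 N equals x * geometric sum
  have h1 : ∑ a ∈ Finset.Icc 1 N, x ^ a ≤ x / (1 - x) := by
    have : ∑ a ∈ Finset.Icc 1 N, x ^ a ≤ ∑' a : ℕ, x ^ (a + 1) := by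
      have hsummable : Summable (fun a : ℕ => x ^ (a + 1)) := by
        simpa [pow_succ, mul_comm] using (summable_geometric_of_lt_one hx0 hx1).mul_left x
      have := Summable.sum_le_tsum (Finset.range N) (fun i _ => pow_nonneg hx0 (i + 1)) hsummable
      refine le_trans (le_of_eq ?_) this
      have hmap : Finset.Icc 1 N = Finset.map ⟨fun i => i + 1, add_left_injective 1⟩ (Finset.range N) := by
        ext k
        simp only [Finset.mem_Icc, Finset.mem_map, Finset.mem_range, Function.Embedding.coeFn_mk]
        constructor
        · rintro ⟨h1, h2⟩; exact ⟨k - 1, by omega, by omega⟩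
        · rintro ⟨i, hi, rfl⟩; omega
      rw [hmap, Finset.sum_map]
      simp only [Function.Embedding.coeFn_mk]
    refine this.trans (le_of_eq ?_)
    have : ∑' a : ℕ, x ^ (a + 1) = x * ∑' a : ℕ, x ^ a := by
      rw [← tsum_mul_left]
      congr 1; ext a; rw [pow_succ, mul_comm]
    rw [this, tsum_geometric_of_lt_one hx0 hx1, div_eq_mul_inv]
  refine h1.trans ?_
  -- x / (1 - x) = 1 / (p^s - 1)
  have hP1 : (1:ℝ) < (p:ℝ) ^ s := Real.one_lt_rpow_iff_of_pos (by positivity) |>.mpr (Or.inl ⟨hp1, hs0⟩)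
  have hxinv : x = ((p:ℝ) ^ s)⁻¹ := by rw [hxdef, Real.rpow_neg (by positivity)]
  have heq : x / (1 - x) = 1 / ((p:ℝ) ^ s - 1) := by
    rw [hxinv]
    field_simp
  rw [heq]
  -- (p-1)^s ≤ p^s - 1
  have hps : ((p:ℝ) - 1) ^ s ≤ (p:ℝ) ^ s - 1 := by
    have hfac : (p:ℝ) - 1 = (p:ℝ) * (1 - 1/(p:ℝ)) := by field_simp
    have h2 : ((p:ℝ) - 1) ^ s = (p:ℝ) ^ s * (1 - 1/(p:ℝ)) ^ s := by
      rw [hfac, Real.mul_rpow (by positivity) (by rw [sub_nonneg]; rw [div_le_one (by positivity)]; linarith)]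
    have h3 : (1 - 1/(p:ℝ)) ^ s ≤ (1 - 1/(p:ℝ)) ^ (1:ℝ) := by
      apply Real.rpow_le_rpow_of_exponent_ge
      · have : 1/(p:ℝ) < 1 := by rw [div_lt_one (by positivity)]; linarith
        linarith
      · have h4 : 0 < 1/(p:ℝ) := by positivity
        linarith
      · exact hs
    have h5 : (p:ℝ) ^ s * (1 - 1/(p:ℝ)) ^ (1:ℝ) = (p:ℝ) ^ s - (p:ℝ) ^ s / (p:ℝ) := by
      rw [Real.rpow_one]; ring
    have h6 : (1:ℝ) ≤ (p:ℝ) ^ s / (p:ℝ) := by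
      rw [le_div_iff₀ (by positivity : (0:ℝ) < (p:ℝ))]
      calc (1:ℝ) * (p:ℝ) = (p:ℝ) ^ (1:ℝ) := by rw [one_mul, Real.rpow_one]
        _ ≤ (p:ℝ) ^ s := Real.rpow_le_rpow_of_exponent_le (le_of_lt hp1) hs
    calc ((p:ℝ) - 1) ^ s = (p:ℝ) ^ s * (1 - 1/(p:ℝ)) ^ s := h2
      _ ≤ (p:ℝ) ^ s * (1 - 1/(p:ℝ)) ^ (1:ℝ) := by
          apply mul_le_mul_of_nonneg_left h3 (by positivity)
      _ = (p:ℝ) ^ s - (p:ℝ) ^ s / (p:ℝ) := h5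
      _ ≤ (p:ℝ) ^ s - 1 := by linarith
  have hq0 : (0:ℝ) < ((p:ℝ) - 1) ^ s := Real.rpow_pos_of_pos (by linarith) _
  rw [Real.rpow_neg (by linarith : (0:ℝ) ≤ (p:ℝ) - 1), ← one_div]
  apply one_div_le_one_div_of_le hq0 hps


private lemma squarefree_prod_primes {S : Finset ℕ} (hS : ∀ p ∈ S, p.Prime) :
    Squarefree (∏ p ∈ S, p) := by
  have hne : (∏ p ∈ S, p) ≠ 0 := Finset.prod_ne_zero_iff.mpr fun p hp => (hS p hp).ne_zero
  rw [Nat.squarefree_iff_factorization_le_one hne]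
  intro q
  rw [Nat.factorization_prod (fun p hp => (hS p hp).ne_zero)]
  rw [Finsupp.finset_sum_apply]
  calc (∑ p ∈ S, p.factorization q) = ∑ p ∈ S, if p = q then 1 else 0 := by
        apply Finset.sum_congr rfl
        intro p hp
        rw [(hS p hp).factorization]
        simp [Finsupp.single_apply]
    _ ≤ 1 := by
        rw [Finset.sum_ite_eq' S q (fun _ => 1)]
        split <;> simp


private lemma fiber_sum_le (s : ℝ) (hs : 1 ≤ s) (N : ℕ) (S : Finset ℕ) (hS : ∀ p ∈ S, p.Prime) :
    ∑ n ∈ (Finset.Icc 1 N).filter (fun n => n.primeFactors = S), (n : ℝ) ^ (-s)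
      ≤ (∏ p ∈ S, ((p : ℝ) - 1)) ^ (-s) := by
  induction S using Finset.induction_on with
  | empty =>
    have hsub : (Finset.Icc 1 N).filter (fun n => n.primeFactors = ∅) ⊆ {1} := by
      intro n hn
      simp only [Finset.mem_filter, Finset.mem_Icc] at hn
      have h1 := Nat.primeFactors_eq_empty.mp hn.2
      simp only [Finset.mem_singleton]
      omega
    calc ∑ n ∈ (Finset.Icc 1 N).filter (fun n => n.primeFactors = ∅), (n : ℝ) ^ (-s)
        ≤ ∑ n ∈ ({1} : Finset ℕ), (n : ℝ) ^ (-s) :=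
          Finset.sum_le_sum_of_subset_of_nonneg hsub
            (fun i _ _ => Real.rpow_nonneg (Nat.cast_nonneg i) _)
      _ = 1 := by simp
      _ = (∏ p ∈ (∅ : Finset ℕ), ((p : ℝ) - 1)) ^ (-s) := by simp
  | @insert p S' hpS' ih =>
    have hp : p.Prime := hS p (Finset.mem_insert_self p S')
    have hS' : ∀ q ∈ S', q.Prime := fun q hq => hS q (Finset.mem_insert_of_mem hq)
    set F := (Finset.Icc 1 N).filter (fun n => n.primeFactors = insert p S') with hF
    set F' := (Finset.Icc 1 N).filter (fun n => n.primeFactors = S') with hF'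
    set e : ℕ → ℕ × ℕ := fun n => (n.factorization p, ordCompl[p] n) with he
    set g : ℕ × ℕ → ℝ := fun q => ((p : ℝ) ^ (-s)) ^ q.1 * ((q.2 : ℝ)) ^ (-s) with hg
    have hmem : ∀ n ∈ F, 1 ≤ n ∧ n ≤ N ∧ n.primeFactors = insert p S' := by
      intro n hn
      simp only [hF, Finset.mem_filter, Finset.mem_Icc] at hn
      exact ⟨hn.1.1, hn.1.2, hn.2⟩
    have hgnonneg : ∀ q : ℕ × ℕ, 0 ≤ g q := by
      intro q
      exact mul_nonneg (pow_nonneg (Real.rpow_nonneg (Nat.cast_nonneg p) _) _)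
        (Real.rpow_nonneg (Nat.cast_nonneg _) _)
    have hval : ∀ n ∈ F, (n : ℝ) ^ (-s) = g (e n) := by
      intro n hn
      obtain ⟨h1, h2, h3⟩ := hmem n hn
      have hn0 : n ≠ 0 := by omega
      have hself : p ^ n.factorization p * ordCompl[p] n = n :=
        Nat.ordProj_mul_ordCompl_eq_self n p
      conv_lhs => rw [← hself]
      push_cast
      rw [Real.mul_rpow (by positivity) (Nat.cast_nonneg _)]
      congr 1
      rw [← Real.rpow_natCast ((p : ℝ) ^ (-s)) _, ← Real.rpow_natCast (p : ℝ) _,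
        ← Real.rpow_mul (Nat.cast_nonneg p), ← Real.rpow_mul (Nat.cast_nonneg p), mul_comm]
    have hinj : ∀ x ∈ F, ∀ y ∈ F, e x = e y → x = y := by
      intro x hx y hy hxy
      simp only [he, Prod.mk.injEq] at hxy
      have hcongr := congrArg₂ (fun a b => p ^ a * b) hxy.1 hxy.2
      simpa only [Nat.ordProj_mul_ordCompl_eq_self] using hcongr
    have hp1 : (0:ℝ) ≤ (p:ℝ) - 1 := by
      have : (1:ℝ) ≤ (p:ℝ) := by exact_mod_cast hp.one_lt.le
      linarith
    have hprodnn : (0:ℝ) ≤ ∏ q ∈ S', ((q:ℝ) - 1) := by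
      apply Finset.prod_nonneg
      intro q hq
      have : (1:ℝ) ≤ (q:ℝ) := by exact_mod_cast (hS' q hq).one_lt.le
      linarith
    have hmaps : ∀ n ∈ F, e n ∈ (Finset.Icc 1 N) ×ˢ F' := by
      intro n hn
      obtain ⟨h1, h2, h3⟩ := hmem n hn
      have hn0 : n ≠ 0 := by omega
      have hpn : p ∣ n := by
        have : p ∈ n.primeFactors := by rw [h3]; exact Finset.mem_insert_self p S'
        exact Nat.dvd_of_mem_primeFactors this
      have ha1 : 1 ≤ n.factorization p := hp.factorization_pos_of_dvd hn0 hpn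
      have haN : n.factorization p ≤ N := by
        have hd : p ^ n.factorization p ∣ n := Nat.ordProj_dvd n p
        have hle : p ^ n.factorization p ≤ n := Nat.le_of_dvd (by omega) hd
        have h2a : n.factorization p < 2 ^ n.factorization p := Nat.lt_two_pow_self
        have h2b : 2 ^ n.factorization p ≤ p ^ n.factorization p :=
          Nat.pow_le_pow_left hp.two_le _
        omega
      have hm1 : 1 ≤ ordCompl[p] n := Nat.ordCompl_pos p hn0
      have hmN : ordCompl[p] n ≤ N := le_trans (Nat.ordCompl_le n p) h2
      have hmpf : (ordCompl[p] n).primeFactors = S' := by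
        rw [← Nat.support_factorization, Nat.factorization_ordCompl, Finsupp.support_erase,
          Nat.support_factorization, h3, Finset.erase_insert hpS']
      simp only [he, Finset.mem_product, Finset.mem_Icc, hF', Finset.mem_filter]
      exact ⟨⟨ha1, haN⟩, ⟨hm1, hmN⟩, hmpf⟩
    calc ∑ n ∈ F, (n : ℝ) ^ (-s) = ∑ n ∈ F, g (e n) := Finset.sum_congr rfl hval
      _ = ∑ q ∈ F.image e, g q := (Finset.sum_image hinj).symm
      _ ≤ ∑ q ∈ (Finset.Icc 1 N) ×ˢ F', g q :=
          Finset.sum_le_sum_of_subset_of_nonneg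
            (Finset.image_subset_iff.mpr hmaps) (fun q _ _ => hgnonneg q)
      _ = (∑ a ∈ Finset.Icc 1 N, ((p : ℝ) ^ (-s)) ^ a) * (∑ m ∈ F', (m : ℝ) ^ (-s)) := by
          rw [Finset.sum_mul_sum]
          rw [Finset.sum_product]
      _ ≤ ((p : ℝ) - 1) ^ (-s) * (∏ q ∈ S', ((q : ℝ) - 1)) ^ (-s) :=
          mul_le_mul (geom_bound' p hp.two_le s hs N) (ih hS')
            (Finset.sum_nonneg fun m _ => Real.rpow_nonneg (Nat.cast_nonneg m) _)
            (Real.rpow_nonneg hp1 _)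
      _ = (∏ q ∈ insert p S', ((q : ℝ) - 1)) ^ (-s) := by
          rw [Finset.prod_insert hpS', Real.mul_rpow hp1 hprodnn]

private lemma sum_rpow_le_sum_moebius (s : ℝ) (hs : 1 ≤ s) (N : ℕ) :
    ∑ n ∈ Finset.Icc 1 N, (n : ℝ) ^ (-s)
      ≤ ∑ d ∈ Finset.Icc 1 N,
          ((ArithmeticFunction.moebius d : ℤ) : ℝ) ^ 2 / (Nat.totient d : ℝ) ^ s := by
  have hmap : ∀ n ∈ Finset.Icc 1 N, (∏ p ∈ n.primeFactors, p) ∈ Finset.Icc 1 N := by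
    intro n hn
    simp only [Finset.mem_Icc] at hn ⊢
    have hd : (∏ p ∈ n.primeFactors, p) ∣ n := Nat.prod_primeFactors_dvd n
    have hpos : 0 < ∏ p ∈ n.primeFactors, p :=
      Finset.prod_pos fun p hp => (Nat.prime_of_mem_primeFactors hp).pos
    exact ⟨hpos, le_trans (Nat.le_of_dvd (by omega) hd) hn.2⟩
  rw [← Finset.sum_fiberwise_of_maps_to hmap (fun n => (n : ℝ) ^ (-s))]
  apply Finset.sum_le_sum
  intro d hd
  simp only [Finset.mem_Icc] at hd
  by_cases hsq : Squarefree d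
  · have hfib : (Finset.Icc 1 N).filter (fun n => ∏ p ∈ n.primeFactors, p = d)
        = (Finset.Icc 1 N).filter (fun n => n.primeFactors = d.primeFactors) := by
      apply Finset.filter_congr
      intro n hn
      constructor
      · intro hprod
        rw [← hprod, Nat.primeFactors_prod (fun p hp => Nat.prime_of_mem_primeFactors hp)]
      · intro hpf
        rw [hpf, Nat.prod_primeFactors_of_squarefree hsq]
    rw [hfib]
    refine (fiber_sum_le s hs N d.primeFactors
      (fun p hp => Nat.prime_of_mem_primeFactors hp)).trans (le_of_eq ?_)
    have hmu : ((ArithmeticFunction.moebius d : ℤ) : ℝ) ^ 2 = 1 := by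
      have := ArithmeticFunction.moebius_sq_eq_one_of_squarefree hsq
      have : ((ArithmeticFunction.moebius d : ℤ) ^ 2 : ℤ) = 1 := by exact_mod_cast this
      exact_mod_cast this
    have hphinat : Nat.totient d = ∏ p ∈ d.primeFactors, (p - 1) := by
      have key := Nat.totient_mul_prod_primeFactors d
      rw [Nat.prod_primeFactors_of_squarefree hsq] at key
      have hd0 : 0 < d := hsq.ne_zero.bot_lt
      rw [mul_comm (Nat.totient d) d] at key
      exact Nat.eq_of_mul_eq_mul_left hd0 key
    have hphi : (Nat.totient d : ℝ) = ∏ p ∈ d.primeFactors, ((p : ℝ) - 1) := by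
      rw [hphinat]
      push_cast [Nat.cast_prod]
      apply Finset.prod_congr rfl
      intro p hp
      have : 1 ≤ p := (Nat.prime_of_mem_primeFactors hp).one_lt.le
      push_cast [Nat.cast_sub this]
      ring
    rw [hmu, hphi, Real.rpow_neg, one_div]
    apply Finset.prod_nonneg
    intro p hp
    have : (1 : ℝ) ≤ (p : ℝ) := by exact_mod_cast (Nat.prime_of_mem_primeFactors hp).one_lt.le
    linarith
  · have hfib : (Finset.Icc 1 N).filter (fun n => ∏ p ∈ n.primeFactors, p = d) = ∅ := by
      rw [Finset.filter_eq_empty_iff]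
      intro n _ hprod
      exact hsq (hprod ▸ squarefree_prod_primes
        (fun p hp => Nat.prime_of_mem_primeFactors hp))
    rw [hfib, ArithmeticFunction.moebius_eq_zero_of_not_squarefree hsq]
    simp


private lemma integral_bound (h : ℝ) (hh : 0 < h) (N : ℕ) (hN : 1 ≤ N) :
    (1 - ((N : ℝ) + 1) ^ (-h)) / h ≤ ∑ n ∈ Finset.Icc 1 N, (n : ℝ) ^ (-(1 + h)) := by
  have hanti : AntitoneOn (fun x : ℝ => x ^ (-(1 + h))) (Set.Icc (1 : ℝ) (1 + N)) := by
    intro a ha b hb hab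
    exact Real.rpow_le_rpow_of_nonpos (lt_of_lt_of_le one_pos ha.1) hab (by linarith)
  have key := hanti.integral_le_sum
  have hint : ∫ x in (1 : ℝ)..(1 + (N : ℝ)), x ^ (-(1 + h))
      = (1 - ((N : ℝ) + 1) ^ (-h)) / h := by
    have hne : h ≠ 0 := hh.ne'
    rw [integral_rpow (Or.inr ⟨by
      intro hc
      have h1 : (1 : ℝ) + h = 1 := neg_inj.mp hc
      exact hne (by linarith), by
      rw [Set.uIcc_of_le (by have := Nat.cast_nonneg (α := ℝ) N; linarith : (1:ℝ) ≤ 1 + (N:ℝ))]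
      intro hc
      have := hc.1
      linarith⟩)]
    have : -(1 + h) + 1 = -h := by ring
    rw [this, Real.one_rpow]
    rw [show ((1 : ℝ) + (N : ℝ)) = ((N : ℝ) + 1) from by ring, div_neg, ← neg_div, neg_sub]
  have hsum : ∑ i ∈ Finset.range N, ((1 : ℝ) + (i : ℕ)) ^ (-(1 + h))
      = ∑ n ∈ Finset.Icc 1 N, (n : ℝ) ^ (-(1 + h)) := by
    have hmap : Finset.Icc 1 N
        = Finset.map ⟨fun i => i + 1, add_left_injective 1⟩ (Finset.range N) := by
      ext k
      simp only [Finset.mem_Icc, Finset.mem_map, Finset.mem_range, Function.Embedding.coeFn_mk]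
      constructor
      · rintro ⟨h1, h2⟩; exact ⟨k - 1, by omega, by omega⟩
      · rintro ⟨i, hi, rfl⟩; omega
    rw [hmap, Finset.sum_map]
    apply Finset.sum_congr rfl
    intro i _
    simp only [Function.Embedding.coeFn_mk]
    push_cast
    ring_nf
  calc (1 - ((N : ℝ) + 1) ^ (-h)) / h = ∫ x in (1 : ℝ)..(1 + (N : ℝ)), x ^ (-(1 + h)) :=
        hint.symm
    _ ≤ ∑ i ∈ Finset.range N, ((1 : ℝ) + (i : ℕ)) ^ (-(1 + h)) := key
    _ = ∑ n ∈ Finset.Icc 1 N, (n : ℝ) ^ (-(1 + h)) := hsum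

/-- Lemma (appGh): `Σ_{d ≤ D} μ²(d)/φ(d)^{1+h} ≥ (1 − D^{−h})/h`. -/
theorem stmt_12 (h : ℝ) (hh : 0 < h) (D : ℝ) (hD : 1 ≤ D) :
    ∑ d ∈ Finset.Icc 1 ⌊D⌋₊,
        ((ArithmeticFunction.moebius d : ℤ) : ℝ) ^ 2 / (Nat.totient d : ℝ) ^ ((1 : ℝ) + h)
      ≥ (1 - D ^ (-h)) / h := by
  set N := ⌊D⌋₊ with hNdef
  have hD0 : (0 : ℝ) < D := lt_of_lt_of_le one_pos hD
  have hN1 : 1 ≤ N := Nat.le_floor (by exact_mod_cast hD)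
  have hDlt : D < (N : ℝ) + 1 := Nat.lt_floor_add_one D
  have hs : (1 : ℝ) ≤ 1 + h := by linarith
  have step1 : (1 - D ^ (-h)) / h ≤ (1 - ((N : ℝ) + 1) ^ (-h)) / h := by
    have : ((N : ℝ) + 1) ^ (-h) ≤ D ^ (-h) :=
      Real.rpow_le_rpow_of_nonpos hD0 hDlt.le (by linarith)
    gcongr
  refine le_trans step1 ?_
  refine le_trans (integral_bound h hh N hN1) ?_
  exact sum_rpow_le_sum_moebius (1 + h) hs N
end
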